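/- Let A : ℝⁿ → ℝᵐ be a nonzero linear map with r := ‖AᵀA‖ < 1 (operator norm), let λ > 0 satisfy ‖Av‖₂² ≤ (λr/2)‖v‖₂² for all v ∈ ℝⁿ, let β ≥ 0, R > 0, y^δ ∈ ℝᵐ, and define D_β^δ(x) = ½‖Ax − y^δ‖₂² − β‖x‖₂ and Φ_λ(w, x) = ½‖Aw − y^δ‖₂² − β‖w‖₂ − ½‖A(w − x)‖₂² + (λ/2)‖w − x‖₂². Let (x^k) be a sequence in B_R = {x ∈ ℝⁿ : ‖x‖₁ ≤ R} such that for each k, x^{k+1} is a minimizer of w ↦ Φ_λ(w, x^k) over B_R. Then D_β^δ(x^{k+1}) ≤ D_β^δ(x^k) for all k, the series Σ_k ‖x^{k+1} − x^k‖₂² converges with Σ_{k=0}^∞ ‖x^{k+1} − x^k‖₂² ≤ (4/(λ(2 − r)))(Φ_λ(x⁰, x⁰) + βR), and in particular ‖x^{k+1} − x^k‖₂ → 0. -/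

import Mathlib

open scoped RealInnerProductSpace BigOperators
open Filter

noncomputable section

/-- The `ℓ¹`-norm on `ℝⁿ`. -/
def l1E {n : ℕ} (x : EuclideanSpace ℝ (Fin n)) : ℝ := ∑ i, |x i|

/-- The `ℓ¹`-ball `B_R = {x ∈ ℝⁿ : ‖x‖₁ ≤ R}`. -/
def BRE (n : ℕ) (R : ℝ) : Set (EuclideanSpace ℝ (Fin n)) := {x | l1E x ≤ R}

/-- The functional `D_β^δ(x) = ½‖Ax − y^δ‖₂² − β‖x‖₂`. -/
def Dfun {n m : ℕ} (A : EuclideanSpace ℝ (Fin n) →L[ℝ] EuclideanSpace ℝ (Fin m))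
    (yδ : EuclideanSpace ℝ (Fin m)) (β : ℝ) (x : EuclideanSpace ℝ (Fin n)) : ℝ :=
  (1 / 2) * ‖A x - yδ‖ ^ 2 - β * ‖x‖

/-- The surrogate functional
`Φ_λ(w, x) = ½‖Aw − y^δ‖₂² − β‖w‖₂ − ½‖A(w − x)‖₂² + (λ/2)‖w − x‖₂²`. -/
def Phi {n m : ℕ} (A : EuclideanSpace ℝ (Fin n) →L[ℝ] EuclideanSpace ℝ (Fin m))
    (yδ : EuclideanSpace ℝ (Fin m)) (β lam : ℝ)
    (w x : EuclideanSpace ℝ (Fin n)) : ℝ :=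
  (1 / 2) * ‖A w - yδ‖ ^ 2 - β * ‖w‖ - (1 / 2) * ‖A (w - x)‖ ^ 2 +
    (lam / 2) * ‖w - x‖ ^ 2


lemma norm_le_l1E {n : ℕ} (x : EuclideanSpace ℝ (Fin n)) : ‖x‖ ≤ l1E x := by
  have hS : 0 ≤ l1E x := Finset.sum_nonneg fun i _ => abs_nonneg _
  rw [EuclideanSpace.norm_eq]
  rw [show l1E x = Real.sqrt ((l1E x) ^ 2) from (Real.sqrt_sq hS).symm]
  apply Real.sqrt_le_sqrt
  have : ∀ i ∈ Finset.univ, ‖x i‖ ^ 2 ≤ |x i| * l1E x := by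
    intro i _
    rw [Real.norm_eq_abs, sq]
    exact mul_le_mul_of_nonneg_left
      (Finset.single_le_sum (f := fun j => |x j|) (fun j _ => abs_nonneg _)
        (Finset.mem_univ i)) (abs_nonneg _)
  calc ∑ i, ‖x i‖ ^ 2 ≤ ∑ i, |x i| * l1E x := Finset.sum_le_sum this
    _ = (l1E x) ^ 2 := by rw [← Finset.sum_mul]; rw [sq]; rfl

/-- monotonicity and asymptotic regularity of the surrogate
iteration: if each `x^{k+1}` minimizes `w ↦ Φ_λ(w, x^k)` over the `ℓ¹`-ball
`B_R`, with `r = ‖AᵀA‖ < 1` and `‖Av‖₂² ≤ (λr/2)‖v‖₂²` for all `v`, then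
`D_β^δ(x^{k+1}) ≤ D_β^δ(x^k)`, the series `Σ‖x^{k+1} − x^k‖₂²` converges with
sum at most `(4/(λ(2 − r)))(Φ_λ(x⁰, x⁰) + βR)`, and `‖x^{k+1} − x^k‖₂ → 0`. -/
theorem stmt12 {n m : ℕ}
    (A : EuclideanSpace ℝ (Fin n) →L[ℝ] EuclideanSpace ℝ (Fin m))
    (hA : A ≠ 0)
    (yδ : EuclideanSpace ℝ (Fin m)) (β lam R : ℝ) (hβ : 0 ≤ β) (hlam : 0 < lam)
    (hR : 0 < R)
    (hr : ‖(ContinuousLinearMap.adjoint A).comp A‖ < 1)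
    (hAlam : ∀ v : EuclideanSpace ℝ (Fin n),
      ‖A v‖ ^ 2 ≤ (lam * ‖(ContinuousLinearMap.adjoint A).comp A‖ / 2) * ‖v‖ ^ 2)
    (x : ℕ → EuclideanSpace ℝ (Fin n))
    (hmem : ∀ k, x k ∈ BRE n R)
    (hmin : ∀ k, ∀ w ∈ BRE n R, Phi A yδ β lam (x (k + 1)) (x k) ≤ Phi A yδ β lam w (x k)) :
    (∀ k, Dfun A yδ β (x (k + 1)) ≤ Dfun A yδ β (x k)) ∧
    Summable (fun k => ‖x (k + 1) - x k‖ ^ 2) ∧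
    (∑' k : ℕ, ‖x (k + 1) - x k‖ ^ 2) ≤
      (4 / (lam * (2 - ‖(ContinuousLinearMap.adjoint A).comp A‖))) *
        (Phi A yδ β lam (x 0) (x 0) + β * R) ∧
    Tendsto (fun k => ‖x (k + 1) - x k‖) atTop (nhds 0) := by
  set r := ‖(ContinuousLinearMap.adjoint A).comp A‖ with hrdef
  have hr0 : 0 ≤ r := norm_nonneg _
  set c := lam * (2 - r) / 4 with hcdef
  have hc : 0 < c := by
    apply div_pos _ (by norm_num)
    exact mul_pos hlam (by linarith)
  -- Phi at (z, z) equals Dfun at z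
  have hPhiDiag : ∀ z, Phi A yδ β lam z z = Dfun A yδ β z := by
    intro z
    simp [Phi, Dfun, sub_self]
  -- key step inequality
  have hstep : ∀ k, Dfun A yδ β (x (k + 1)) + c * ‖x (k + 1) - x k‖ ^ 2
      ≤ Dfun A yδ β (x k) := by
    intro k
    have h1 := hmin k (x k) (hmem k)
    rw [hPhiDiag] at h1
    have h2 := hAlam (x (k + 1) - x k)
    have h3 : Phi A yδ β lam (x (k + 1)) (x k)
        = Dfun A yδ β (x (k + 1)) + ((lam / 2) * ‖x (k + 1) - x k‖ ^ 2
          - (1 / 2) * ‖A (x (k + 1) - x k)‖ ^ 2) := by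
      simp [Phi, Dfun]; ring
    rw [h3] at h1
    have hnn : 0 ≤ ‖x (k + 1) - x k‖ ^ 2 := sq_nonneg _
    nlinarith [h1, h2]
  have hmono : ∀ k, Dfun A yδ β (x (k + 1)) ≤ Dfun A yδ β (x k) := by
    intro k
    have := hstep k
    nlinarith [sq_nonneg ‖x (k + 1) - x k‖, hc.le]
  -- lower bound on Dfun on the ball
  have hDlb : ∀ k, -(β * R) ≤ Dfun A yδ β (x k) := by
    intro k
    have h1 : ‖x k‖ ≤ R := (norm_le_l1E (x k)).trans (hmem k)
    have h2 : β * ‖x k‖ ≤ β * R := mul_le_mul_of_nonneg_left h1 hβ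
    have h3 : 0 ≤ (1 / 2) * ‖A (x k) - yδ‖ ^ 2 := by positivity
    simp only [Dfun]; linarith
  -- partial sums
  have hpartial : ∀ N, ∑ k ∈ Finset.range N, ‖x (k + 1) - x k‖ ^ 2
      ≤ (Dfun A yδ β (x 0) + β * R) / c := by
    intro N
    have htel : ∀ N, ∑ k ∈ Finset.range N, c * ‖x (k + 1) - x k‖ ^ 2
        ≤ Dfun A yδ β (x 0) - Dfun A yδ β (x N) := by
      intro N
      induction N with
      | zero => simp
      | succ N ih =>
        rw [Finset.sum_range_succ]
        have := hstep N
        linarith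
    have h1 := htel N
    have h2 := hDlb N
    rw [le_div_iff₀ hc]
    calc (∑ k ∈ Finset.range N, ‖x (k + 1) - x k‖ ^ 2) * c
        = ∑ k ∈ Finset.range N, c * ‖x (k + 1) - x k‖ ^ 2 := by
          rw [Finset.sum_mul]; congr 1; ext k; ring
      _ ≤ Dfun A yδ β (x 0) + β * R := by linarith
  have hsummable : Summable (fun k => ‖x (k + 1) - x k‖ ^ 2) :=
    summable_of_sum_range_le (fun k => sq_nonneg _) hpartial
  have hbound : (Dfun A yδ β (x 0) + β * R) / c
      = (4 / (lam * (2 - r))) * (Phi A yδ β lam (x 0) (x 0) + β * R) := by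
    rw [hPhiDiag]
    rw [hcdef]
    field_simp
  refine ⟨hmono, hsummable, ?_, ?_⟩
  · rw [← hbound]
    exact Summable.tsum_le_of_sum_range_le hsummable hpartial
  · have h0 : Tendsto (fun k => ‖x (k + 1) - x k‖ ^ 2) atTop (nhds 0) :=
      hsummable.tendsto_atTop_zero
    have := (Real.continuous_sqrt.tendsto 0).comp h0
    simp only [Function.comp_def, Real.sqrt_sq (norm_nonneg _), Real.sqrt_zero] at this
    exact this
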